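/- arXiv:1003.2004 — 7 statements merged into one kernel-verified Lean document; each statement's English description precedes it below -/
import Mathlib

section
/- For all real x with 0 < x < 1, all integers T ≥ 3, and all integers n, k with n ≥ T+1 and 0 ≤ k ≤ n - T - 1, one has e^{-2/T}·(n-k)^{-x}·T^{x} ≤ ∏_{j=T+1}^{n-k} (1 - x/j) ≤ e^{2/T}·(n-k)^{-x}·T^{x}. -/
/-!
With `S = ∑_{T<j≤m} 1/j`, the inequalities `1 - t ≤ exp (-t)` and `exp (-t - 2t²) ≤ 1 - t`
(for `t ≤ 1/2`) squeeze the product between `exp (-xS - 2x² ∑ 1/j²)` and `exp (-xS)`, and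
`∑_{T<j≤m} 1/j² ≤ 1/T`. Since `H_n - log n` decreases and `H_n - log (n + 1)` increases (the two
sequences converging to the Euler–Mascheroni constant), `log m - log T - 1/T ≤ S ≤ log m - log T`.
-/

open Finset Real

lemma sum_Ioc_inv_eq_harmonic_sub_harmonic {T m : ℕ} (h : T ≤ m) :
    ∑ j ∈ Ioc T m, (j : ℝ)⁻¹ = harmonic m - harmonic T := by
  have hsplit := sum_Ioc_consecutive (fun j : ℕ ↦ (j : ℝ)⁻¹) (Nat.zero_le T) h
  have hIcc (n : ℕ) : Icc 1 n = Ioc 0 n := Icc_add_one_left_eq_Ioc 0 n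
  simp only [harmonic_eq_sum_Icc, hIcc, Rat.cast_sum, Rat.cast_inv, Rat.cast_natCast]
  linarith

lemma harmonic_sub_harmonic_le_log_sub_log {T m : ℕ} (hT : T ≠ 0) (h : T ≤ m) :
    (harmonic m : ℝ) - harmonic T ≤ log m - log T := by
  have hanti := strictAnti_eulerMascheroniSeq'.antitone h
  simp only [eulerMascheroniSeq', hT, (Nat.pos_of_ne_zero hT).trans_le h |>.ne', if_false]
    at hanti
  linarith

lemma log_sub_log_le_harmonic_sub_harmonic {T m : ℕ} (h : T ≤ m) :
    log (m + 1) - log (T + 1) ≤ (harmonic m : ℝ) - harmonic T := by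
  have hmono := strictMono_eulerMascheroniSeq.monotone h
  simp only [eulerMascheroniSeq] at hmono
  linarith

lemma log_add_one_sub_log_le_inv {T : ℝ} (hT : 0 < T) : log (T + 1) - log T ≤ T⁻¹ := by
  rw [← log_div (by positivity) hT.ne']
  calc log ((T + 1) / T) ≤ (T + 1) / T - 1 := log_le_sub_one_of_pos (by positivity)
    _ = T⁻¹ := by field_simp; ring

lemma sum_Ioc_inv_le_log_sub_log {T m : ℕ} (hT : T ≠ 0) (h : T ≤ m) :
    ∑ j ∈ Ioc T m, (j : ℝ)⁻¹ ≤ log m - log T :=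
  (sum_Ioc_inv_eq_harmonic_sub_harmonic h).trans_le (harmonic_sub_harmonic_le_log_sub_log hT h)

lemma log_sub_log_le_sum_Ioc_inv_add_inv {T m : ℕ} (hT : T ≠ 0) (h : T ≤ m) :
    log m - log T ≤ ∑ j ∈ Ioc T m, (j : ℝ)⁻¹ + (T : ℝ)⁻¹ := by
  have hTpos : (0 : ℝ) < T := by positivity
  have hm : log m ≤ log (m + 1) :=
    log_le_log (hTpos.trans_le (by exact_mod_cast h)) (by linarith)
  linarith [log_sub_log_le_harmonic_sub_harmonic h, log_add_one_sub_log_le_inv hTpos,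
    sum_Ioc_inv_eq_harmonic_sub_harmonic h]

lemma exp_neg_sub_two_mul_sq_le_one_sub {t : ℝ} (ht : t ≤ 1 / 2) :
    exp (-t - 2 * t ^ 2) ≤ 1 - t := by
  have hpos : 0 < 1 - t := by linarith
  rw [← le_log_iff_exp_le hpos]
  calc -t - 2 * t ^ 2 ≤ -t / (1 - t) := by
        rw [le_div_iff₀ hpos]
        nlinarith [mul_nonneg (sq_nonneg t) (by linarith : 0 ≤ 1 - 2 * t)]
    _ = 1 - (1 - t)⁻¹ := by field_simp; ring
    _ ≤ log (1 - t) := one_sub_inv_le_log_of_pos hpos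

lemma prod_one_sub_le_exp_neg_sum {ι : Type*} {s : Finset ι} {a : ι → ℝ}
    (h : ∀ i ∈ s, a i ≤ 1) : ∏ i ∈ s, (1 - a i) ≤ exp (-∑ i ∈ s, a i) := by
  rw [← sum_neg_distrib, exp_sum]
  exact prod_le_prod (fun i hi ↦ sub_nonneg.2 (h i hi)) fun i _ ↦ one_sub_le_exp_neg (a i)

lemma exp_neg_sum_sub_two_mul_sum_sq_le_prod_one_sub {ι : Type*} {s : Finset ι} {a : ι → ℝ}
    (h : ∀ i ∈ s, a i ≤ 1 / 2) :
    exp (-∑ i ∈ s, a i - 2 * ∑ i ∈ s, a i ^ 2) ≤ ∏ i ∈ s, (1 - a i) := by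
  rw [mul_sum, ← sum_neg_distrib, ← sum_sub_distrib, exp_sum]
  exact prod_le_prod (fun i _ ↦ (exp_pos _).le)
    fun i hi ↦ exp_neg_sub_two_mul_sq_le_one_sub (h i hi)

lemma exp_mul_rpow_neg_mul_rpow {m T : ℝ} (hm : 0 < m) (hT : 0 < T) (c x : ℝ) :
    exp c * m ^ (-x) * T ^ x = exp (c - x * (log m - log T)) := by
  rw [rpow_def_of_pos hm, rpow_def_of_pos hT, ← exp_add, ← exp_add]
  ring_nf

lemma sum_Ioc_div_eq_mul_sum_inv (x : ℝ) (T m : ℕ) :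
    ∑ j ∈ Ioc T m, x / (j : ℝ) = x * ∑ j ∈ Ioc T m, (j : ℝ)⁻¹ := by
  simp only [mul_sum, div_eq_mul_inv]

section ProductBounds

variable {x : ℝ} {T m : ℕ}

lemma prod_Ioc_one_sub_div_le (hx0 : 0 ≤ x) (hx1 : x ≤ 1) (hT : T ≠ 0) (h : T ≤ m) :
    ∏ j ∈ Ioc T m, (1 - x / (j : ℝ)) ≤ exp (2 / T) * (m : ℝ) ^ (-x) * (T : ℝ) ^ x := by
  have hTpos : (0 : ℝ) < T := by positivity
  have hmpos : (0 : ℝ) < m := hTpos.trans_le (by exact_mod_cast h)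
  have hterm : ∀ j ∈ Ioc T m, x / (j : ℝ) ≤ 1 := fun j hj ↦
    div_le_one_of_le₀ (hx1.trans (by exact_mod_cast (mem_Ioc.1 hj).1.pos)) j.cast_nonneg
  have hlog := mul_le_mul_of_nonneg_left (log_sub_log_le_sum_Ioc_inv_add_inv hT h) hx0
  have hxT : x * (T : ℝ)⁻¹ ≤ 2 / T := by
    rw [div_eq_mul_inv]
    exact mul_le_mul_of_nonneg_right (by linarith) (by positivity)
  calc ∏ j ∈ Ioc T m, (1 - x / (j : ℝ))
      ≤ exp (-∑ j ∈ Ioc T m, x / (j : ℝ)) := prod_one_sub_le_exp_neg_sum hterm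
    _ ≤ exp (2 / T - x * (log m - log T)) := by
      rw [exp_le_exp, sum_Ioc_div_eq_mul_sum_inv]
      linarith
    _ = exp (2 / T) * (m : ℝ) ^ (-x) * (T : ℝ) ^ x :=
      (exp_mul_rpow_neg_mul_rpow hmpos hTpos _ _).symm

lemma le_prod_Ioc_one_sub_div (hx0 : 0 ≤ x) (hx1 : x ≤ 1) (hT : T ≠ 0) (h : T ≤ m) :
    exp (-2 / T) * (m : ℝ) ^ (-x) * (T : ℝ) ^ x ≤ ∏ j ∈ Ioc T m, (1 - x / (j : ℝ)) := by
  have hTpos : (0 : ℝ) < T := by positivity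
  have hmpos : (0 : ℝ) < m := hTpos.trans_le (by exact_mod_cast h)
  have hterm : ∀ j ∈ Ioc T m, x / (j : ℝ) ≤ 1 / 2 := fun j hj ↦ by
    have hTj := (mem_Ioc.1 hj).1
    have hj : (2 : ℝ) ≤ j := by exact_mod_cast (show 2 ≤ j by omega)
    rw [div_le_iff₀ (by linarith)]
    linarith
  have hsq : ∑ j ∈ Ioc T m, (x / (j : ℝ)) ^ 2 = x ^ 2 * ∑ j ∈ Ioc T m, ((j : ℝ) ^ 2)⁻¹ := by
    rw [mul_sum]
    exact sum_congr rfl fun j _ ↦ by ring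
  have hlog := mul_le_mul_of_nonneg_left (sum_Ioc_inv_le_log_sub_log hT h) hx0
  have hsum_sq : x ^ 2 * ∑ j ∈ Ioc T m, ((j : ℝ) ^ 2)⁻¹ ≤ (T : ℝ)⁻¹ := by
    have hQ := sum_Ioc_inv_sq_le_sub (α := ℝ) hT h
    have hQ0 : 0 ≤ ∑ j ∈ Ioc T m, ((j : ℝ) ^ 2)⁻¹ := sum_nonneg fun j _ ↦ by positivity
    have hx2 : x ^ 2 ≤ 1 := pow_le_one₀ hx0 hx1
    have hm : (0 : ℝ) ≤ (m : ℝ)⁻¹ := by positivity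
    nlinarith
  calc exp (-2 / T) * (m : ℝ) ^ (-x) * (T : ℝ) ^ x
      = exp (-2 / T - x * (log m - log T)) := exp_mul_rpow_neg_mul_rpow hmpos hTpos _ _
    _ ≤ exp (-∑ j ∈ Ioc T m, x / (j : ℝ) - 2 * ∑ j ∈ Ioc T m, (x / (j : ℝ)) ^ 2) := by
      rw [exp_le_exp, sum_Ioc_div_eq_mul_sum_inv, hsq, neg_div, div_eq_mul_inv]
      linarith
    _ ≤ ∏ j ∈ Ioc T m, (1 - x / (j : ℝ)) := exp_neg_sum_sub_two_mul_sum_sq_le_prod_one_sub hterm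

end ProductBounds

theorem stmt_2 (x : ℝ) (hx0 : 0 < x) (hx1 : x < 1) (T n k : ℕ) (hT : 3 ≤ T)
    (hn : T + 1 ≤ n) (hk : k ≤ n - T - 1) :
    Real.exp (-2 / T) * ((n : ℝ) - k) ^ (-x) * (T : ℝ) ^ x ≤
      ∏ j ∈ Finset.Icc (T + 1) (n - k), (1 - x / (j : ℝ)) ∧
    ∏ j ∈ Finset.Icc (T + 1) (n - k), (1 - x / (j : ℝ)) ≤
      Real.exp (2 / T) * ((n : ℝ) - k) ^ (-x) * (T : ℝ) ^ x := by
  have hcast : (n : ℝ) - k = (n - k : ℕ) := by rw [Nat.cast_sub (by omega)]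
  have hT0 : T ≠ 0 := by omega
  have hTm : T ≤ n - k := by omega
  rw [hcast, Icc_add_one_left_eq_Ioc]
  exact ⟨le_prod_Ioc_one_sub_div hx0.le hx1.le hT0 hTm,
    prod_Ioc_one_sub_div_le hx0.le hx1.le hT0 hTm⟩
end

section
/- Define f_{n,k}(x) recursively by f_{n,0}(x)=1, f_{n,1}(x)=1+λ-x, and f_{n,k}(x)=(λ+k-x)f_{n,k-1}(x) - λ(k-1)f_{n,k-2}(x) for k ≥ 2, where λ > 0 is a real parameter. Then for all 0 ≤ k, f_{n,k}(x) = ∑_{j=0}^{k} C(k,j)·λ^j·∏_{i=1}^{k-j}(i-x). -/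
/-- The polynomials `f_{n,k}(x)` associated to the `M/M/n` queue, with arrival rate `lam`. -/
noncomputable def birthDeathPoly (lam : ℝ) : ℕ → ℝ → ℝ
  | 0, _ => 1
  | 1, x => 1 + lam - x
  | (k + 2), x =>
      (lam + (k + 2) - x) * birthDeathPoly lam (k + 1) x -
        lam * (k + 1) * birthDeathPoly lam k x

noncomputable def Pprod (x : ℝ) (m : ℕ) : ℝ := ∏ i ∈ Finset.Icc 1 m, ((i : ℝ) - x)

noncomputable def Ssum (lam x : ℝ) (k : ℕ) : ℝ :=
  ∑ j ∈ Finset.range (k + 1), (k.choose j : ℝ) * lam ^ j * Pprod x (k - j)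

lemma Pstep (x : ℝ) (m : ℕ) : Pprod x (m + 1) = ((m : ℝ) + 1 - x) * Pprod x m := by
  unfold Pprod
  rw [Finset.prod_Icc_succ_top (by omega)]
  push_cast
  ring

lemma key (lam x : ℝ) (k : ℕ) :
    ∑ j ∈ Finset.range (k + 2), (j : ℝ) * ((k + 1).choose j : ℝ) * lam ^ j * Pprod x (k + 1 - j)
      = lam * (k + 1) * Ssum lam x k := by
  rw [Finset.sum_range_succ']
  simp only [Nat.cast_zero, zero_mul, add_zero]
  rw [Ssum, Finset.mul_sum]
  apply Finset.sum_congr rfl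
  intro j hj
  have hc : (((k + 1).choose (j + 1) : ℝ)) * ((j : ℝ) + 1) = ((k : ℝ) + 1) * (k.choose j : ℝ) := by
    exact_mod_cast congrArg (Nat.cast (R := ℝ)) (Nat.add_one_mul_choose_eq k j).symm
  have h2 : k + 1 - (j + 1) = k - j := by omega
  rw [h2]
  push_cast
  linear_combination (lam ^ (j + 1) * Pprod x (k - j)) * hc

lemma hT (lam x : ℝ) (k : ℕ) :
    ∑ j ∈ Finset.range (k + 2), ((k + 1).choose j : ℝ) * lam ^ j * Pprod x (k + 2 - j)
      = ((k : ℝ) + 2 - x) * Ssum lam x (k + 1) - lam * (k + 1) * Ssum lam x k := by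
  rw [← key lam x k, Ssum, Finset.mul_sum, ← Finset.sum_sub_distrib]
  apply Finset.sum_congr rfl
  intro j hj
  have hj' : j ≤ k + 1 := by
    have := Finset.mem_range.mp hj; omega
  have h2 : k + 2 - j = (k + 1 - j) + 1 := by omega
  rw [h2, Pstep]
  have h3 : ((k + 1 - j : ℕ) : ℝ) = (k : ℝ) + 1 - j := by
    rw [Nat.cast_sub hj']; push_cast; ring
  rw [h3]
  ring

lemma hS (lam x : ℝ) (k : ℕ) :
    Ssum lam x (k + 2)
      = (∑ j ∈ Finset.range (k + 2), ((k + 1).choose j : ℝ) * lam ^ j * Pprod x (k + 2 - j))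
        + lam * Ssum lam x (k + 1) := by
  rw [Ssum, Finset.sum_range_succ']
  have e1 : ∀ j ∈ Finset.range (k + 2),
      ((k + 2).choose (j + 1) : ℝ) * lam ^ (j + 1) * Pprod x (k + 2 - (j + 1))
        = ((k + 1).choose (j + 1) : ℝ) * lam ^ (j + 1) * Pprod x (k + 1 - j)
          + lam * (((k + 1).choose j : ℝ) * lam ^ j * Pprod x (k + 1 - j)) := by
    intro j hj
    have h2 : k + 2 - (j + 1) = k + 1 - j := by omega
    rw [h2, Nat.choose_succ_succ (k + 1) j]
    push_cast
    ring
  rw [Finset.sum_congr rfl e1, Finset.sum_add_distrib]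
  rw [show (∑ j ∈ Finset.range (k + 2), ((k + 1).choose j : ℝ) * lam ^ j * Pprod x (k + 2 - j))
      = (∑ j ∈ Finset.range (k + 1), ((k + 1).choose (j + 1) : ℝ) * lam ^ (j + 1) * Pprod x (k + 1 - j))
        + ((k + 1).choose 0 : ℝ) * lam ^ 0 * Pprod x (k + 2 - 0) from by
    rw [Finset.sum_range_succ']
    apply congrArg₂ _ (Finset.sum_congr rfl fun j hj => ?_) rfl
    have h2 : k + 2 - (j + 1) = k + 1 - j := by omega
    rw [h2]]
  rw [show (∑ j ∈ Finset.range (k + 2), ((k + 1).choose (j + 1) : ℝ) * lam ^ (j + 1) * Pprod x (k + 1 - j))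
      = ∑ j ∈ Finset.range (k + 1), ((k + 1).choose (j + 1) : ℝ) * lam ^ (j + 1) * Pprod x (k + 1 - j) from by
    rw [Finset.sum_range_succ, Nat.choose_succ_self]
    simp]
  rw [Ssum, Finset.mul_sum]
  simp only [Nat.choose_zero_right, Nat.cast_one, pow_zero, Nat.sub_zero, Nat.choose_succ_self]
  ring_nf
  ring

lemma birthDeathPoly_eq_Ssum (lam x : ℝ) : ∀ k : ℕ, birthDeathPoly lam k x = Ssum lam x k := by
  intro k
  induction k using Nat.strong_induction_on with
  | _ k ih =>
    match k with
    | 0 => simp [birthDeathPoly, Ssum, Pprod]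
    | 1 =>
      simp [birthDeathPoly, Ssum, Pprod, Finset.sum_range_succ]
      ring
    | (k + 2) =>
      have h1 := ih (k + 1) (by omega)
      have h0 := ih k (by omega)
      rw [birthDeathPoly, h1, h0, hS, hT]
      ring

theorem stmt_4 (lam : ℝ) (hlam : 0 < lam) (k : ℕ) (x : ℝ) :
    birthDeathPoly lam k x =
      ∑ j ∈ Finset.range (k + 1),
        (k.choose j : ℝ) * lam ^ j * ∏ i ∈ Finset.Icc 1 (k - j), ((i : ℝ) - x) := by
  simpa [Ssum, Pprod] using birthDeathPoly_eq_Ssum lam x k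
end

section
/- Let λ > 0 and define f_k(x) by f_0 = 1, f_1(x) = 1+λ-x, f_k(x) = (λ+k-x)f_{k-1}(x) - λ(k-1)f_{k-2}(x). Then for every k and every x ≤ 1, f_k(x) > 0. -/
theorem stmt_5 (lam : ℝ) (hlam : 0 < lam) (k : ℕ) (x : ℝ) (hx : x ≤ 1) :
    0 < birthDeathPoly lam k x := by
  suffices h : ∀ n : ℕ, 0 < birthDeathPoly lam n x ∧
      lam * birthDeathPoly lam n x ≤ birthDeathPoly lam (n + 1) x from (h k).1
  intro n
  induction n with
  | zero =>
    simp only [birthDeathPoly]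
    constructor
    · norm_num
    · nlinarith
  | succ m ih =>
    obtain ⟨h1, h2⟩ := ih
    have hpos : 0 < birthDeathPoly lam (m + 1) x :=
      lt_of_lt_of_le (mul_pos hlam h1) h2
    refine ⟨hpos, ?_⟩
    show lam * birthDeathPoly lam (m + 1) x ≤ birthDeathPoly lam (m + 2) x
    have hrec : birthDeathPoly lam (m + 2) x =
        (lam + (m + 2) - x) * birthDeathPoly lam (m + 1) x -
          lam * (m + 1) * birthDeathPoly lam m x := rfl
    have hm : (0 : ℝ) ≤ (m : ℝ) := Nat.cast_nonneg m
    nlinarith [mul_nonneg (sub_nonneg.mpr h2) (by linarith : (0:ℝ) ≤ (m:ℝ) + 2 - x),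
      mul_nonneg (mul_nonneg hlam.le (by linarith : (0:ℝ) ≤ 1 - x)) h1.le]
end

section
/- Let λ, n, x be positive reals with (√n-√λ)² < x < (√n+√λ)², and set b² = 4λn - (λ+n-x)² > 0. Then sup over real z of (z - 1)²/(z² - ((λ+n-x)/λ)z + n/λ) equals 4λx/b², provided 4λx/b² ≥ 1. -/
theorem stmt_8 (lam n x : ℝ) (hlam : 0 < lam) (hn : 0 < n) (hx : 0 < x)
    (h1 : (Real.sqrt n - Real.sqrt lam) ^ 2 < x)
    (h2 : x < (Real.sqrt n + Real.sqrt lam) ^ 2)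
    (hge : 1 ≤ 4 * lam * x / (4 * lam * n - (lam + n - x) ^ 2)) :
    (⨆ z : ℝ, (z - 1) ^ 2 / (z ^ 2 - ((lam + n - x) / lam) * z + n / lam)) =
      4 * lam * x / (4 * lam * n - (lam + n - x) ^ 2) := by
  have hsl : Real.sqrt lam ^ 2 = lam := Real.sq_sqrt hlam.le
  have hsn : Real.sqrt n ^ 2 = n := Real.sq_sqrt hn.le
  have hb : 0 < 4 * lam * n - (lam + n - x) ^ 2 := by
    nlinarith [sq_nonneg (Real.sqrt n * Real.sqrt lam), Real.sqrt_nonneg lam, Real.sqrt_nonneg n,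
      mul_pos (Real.sqrt_pos.mpr hn) (Real.sqrt_pos.mpr hlam)]
  -- denominator positivity
  have hQ : ∀ z : ℝ, 0 < lam * z ^ 2 - (lam + n - x) * z + n := by
    intro z
    nlinarith [sq_nonneg (2 * lam * z - (lam + n - x)), hlam, hb]
  have hD : ∀ z : ℝ, 0 < z ^ 2 - ((lam + n - x) / lam) * z + n / lam := by
    intro z
    have := hQ z
    have h := div_pos this hlam
    have : (lam * z ^ 2 - (lam + n - x) * z + n) / lam
        = z ^ 2 - ((lam + n - x) / lam) * z + n / lam := by
      field_simp
    linarith [this ▸ h]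
  -- upper bound
  have hub : ∀ z : ℝ, (z - 1) ^ 2 / (z ^ 2 - ((lam + n - x) / lam) * z + n / lam)
      ≤ 4 * lam * x / (4 * lam * n - (lam + n - x) ^ 2) := by
    intro z
    rw [div_le_div_iff₀ (hD z) hb]
    have h := mul_nonneg hlam.le (sq_nonneg ((lam + x - n) * z - (lam - x - n)))
    have hQz := hQ z
    have hlne : lam ≠ 0 := ne_of_gt hlam
    have hrw : 4 * lam * x * (z ^ 2 - (lam + n - x) / lam * z + n / lam)
        = 4 * x * (lam * z ^ 2 - (lam + n - x) * z + n) := by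
      field_simp
    rw [hrw]
    nlinarith [sq_nonneg ((lam + x - n) * z - (lam - x - n))]
  have hbdd : BddAbove (Set.range fun z : ℝ =>
      (z - 1) ^ 2 / (z ^ 2 - ((lam + n - x) / lam) * z + n / lam)) :=
    ⟨_, by rintro _ ⟨z, rfl⟩; exact hub z⟩
  have hlne : lam ≠ 0 := ne_of_gt hlam
  rcases eq_or_ne (lam + x - n) 0 with hs | hs
  · -- boundary case : sup equals 1, not attained
    have hn' : n = lam + x := by linarith
    subst hn'
    have hbne : (4 * lam * (lam + x) - (lam + (lam + x) - x) ^ 2) ≠ 0 := ne_of_gt hb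
    have hM1 : 4 * lam * x / (4 * lam * (lam + x) - (lam + (lam + x) - x) ^ 2) = 1 := by
      rw [div_eq_one_iff_eq hbne]; ring
    rw [hM1]
    refine le_antisymm (ciSup_le fun z => (hub z).trans (le_of_eq hM1)) ?_
    by_contra hlt
    push_neg at hlt
    set S := ⨆ z : ℝ, (z - 1) ^ 2 / (z ^ 2 - ((lam + (lam + x) - x) / lam) * z + (lam + x) / lam)
      with hS
    have hS0 : 0 ≤ S := by
      have h1' := le_ciSup hbdd (1 : ℝ)
      exact le_trans (div_nonneg (sq_nonneg _) (hD 1).le) h1'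
    set k := x / lam with hk
    have hkpos : 0 < k := div_pos hx hlam
    have h1S : (0:ℝ) < 1 - S := by linarith
    have hargnn : 0 ≤ S * k / (1 - S) + 1 := by
      have : 0 ≤ S * k / (1 - S) := div_nonneg (mul_nonneg hS0 hkpos.le) h1S.le
      linarith
    set w := Real.sqrt (S * k / (1 - S) + 1) with hwdef
    have hw : w ^ 2 = S * k / (1 - S) + 1 := Real.sq_sqrt hargnn
    have hkey : (1 - S) * w ^ 2 = S * k + (1 - S) := by
      rw [hw]; field_simp [ne_of_gt h1S]
    have hle := le_ciSup hbdd (1 + w)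
    rw [← hS] at hle
    have hDw := hD (1 + w)
    rw [div_le_iff₀ hDw] at hle
    have hDval : (1 + w) ^ 2 - (lam + (lam + x) - x) / lam * (1 + w) + (lam + x) / lam
        = w ^ 2 + k := by
      rw [hk]; field_simp; ring
    rw [hDval] at hle
    nlinarith [hle, hkey, hlt, hkpos]
  · -- interior case : sup attained at z* = (lam - x - n)/(lam + x - n)
    set z₀ := (lam - x - n) / (lam + x - n) with hz0
    have hval : (z₀ - 1) ^ 2 / (z₀ ^ 2 - ((lam + n - x) / lam) * z₀ + n / lam)
        = 4 * lam * x / (4 * lam * n - (lam + n - x) ^ 2) := by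
      rw [div_eq_div_iff (hD z₀).ne' hb.ne']
      rw [hz0]
      field_simp
      ring
    refine le_antisymm (ciSup_le hub) ?_
    calc 4 * lam * x / (4 * lam * n - (lam + n - x) ^ 2)
        = (z₀ - 1) ^ 2 / (z₀ ^ 2 - ((lam + n - x) / lam) * z₀ + n / lam) := hval.symm
      _ ≤ _ := le_ciSup hbdd z₀
end

section
/- Let B > 0, λ_n = n - B√n with λ_n > 0. Define g_n(k) = λ_n^k/k! for 0 ≤ k ≤ n and g_n(k) = (λ_n^n/n!)(λ_n/n)^{k-n} for k > n. Then for all sufficiently large n (depending only on B), for every k ≥ 0, g_n(k)·n!/λ_n^n ≤ (1 + n^{-1/4})·e^{B²}. -/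
/-!
Write `λ = n - B√n` and `m = ⌊λ⌋`. The sequence `λ^k / k!` peaks at `k = m`, and
`n! ≤ m! n^(n-m)`, so for `k ≤ n` the normalized value is at most `(n/λ)^(n-m)`. Since
`n/λ = 1 + B/(√n - B)` and `n - m ≤ B√n + 1`, this is at most
`exp (B² + (B³ + B)/(√n - B)) = e^{B²} (1 + O(n^{-1/2}))`, and `O(n^{-1/2}) ≤ n^{-1/4}` for large
`n`. For `k > n` the normalized value is `(λ/n)^(k-n) ≤ 1`.
-/

open Real Nat

theorem Nat.factorial_le_factorial_mul_pow_sub {m n : ℕ} (h : m ≤ n) :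
    n ! ≤ m ! * n ^ (n - m) := by
  have hsplit := Nat.factorial_mul_descFactorial (Nat.sub_le n m)
  rw [Nat.sub_sub_self h] at hsplit
  rw [← hsplit]
  exact Nat.mul_le_mul_left _ (Nat.descFactorial_le_pow n _)

lemma pow_div_factorial_le_of_le_of_le {x : ℝ} {k m : ℕ} (hkm : k ≤ m) (hmx : (m : ℝ) ≤ x) :
    x ^ k / k ! ≤ x ^ m / m ! := by
  have hx : 0 ≤ x := (Nat.cast_nonneg m).trans hmx
  have hfac : (m ! : ℝ) ≤ k ! * (m : ℝ) ^ (m - k) := by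
    exact_mod_cast Nat.factorial_le_factorial_mul_pow_sub hkm
  rw [div_le_div_iff₀ (by positivity) (by positivity)]
  calc x ^ k * m ! ≤ x ^ k * (k ! * (m : ℝ) ^ (m - k)) := by gcongr
    _ ≤ x ^ k * (k ! * x ^ (m - k)) := by gcongr
    _ = x ^ m * k ! := by rw [← Nat.add_sub_cancel' hkm, pow_add, Nat.add_sub_cancel_left]; ring

lemma pow_div_factorial_le_of_le_of_le_succ {x : ℝ} {k m : ℕ} (hx : 0 ≤ x) (hmk : m ≤ k)
    (hxm : x ≤ m + 1) : x ^ k / k ! ≤ x ^ m / m ! := by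
  obtain ⟨d, rfl⟩ := Nat.exists_eq_add_of_le hmk
  have hfac : (m ! : ℝ) * ((m : ℝ) + 1) ^ d ≤ (m + d)! := by
    exact_mod_cast Nat.factorial_mul_pow_le_factorial
  rw [div_le_div_iff₀ (by positivity) (by positivity)]
  calc x ^ (m + d) * m ! = x ^ m * (m ! * x ^ d) := by ring
    _ ≤ x ^ m * (m ! * ((m : ℝ) + 1) ^ d) := by gcongr
    _ ≤ x ^ m * (m + d)! := by gcongr

theorem pow_div_factorial_le_floor {x : ℝ} (hx : 0 ≤ x) (k : ℕ) :
    x ^ k / k ! ≤ x ^ ⌊x⌋₊ / ⌊x⌋₊ ! := by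
  rcases le_total k ⌊x⌋₊ with hk | hk
  · exact pow_div_factorial_le_of_le_of_le hk (Nat.floor_le hx)
  · exact pow_div_factorial_le_of_le_of_le_succ hx hk (Nat.lt_floor_add_one x).le

lemma pow_div_factorial_mul_factorial_div_pow_le {x : ℝ} (hx : 0 < x) {m n : ℕ} (h : m ≤ n) :
    x ^ m / m ! * n ! / x ^ n ≤ ((n : ℝ) / x) ^ (n - m) := by
  have hfac : (n ! : ℝ) ≤ m ! * (n : ℝ) ^ (n - m) := by
    exact_mod_cast Nat.factorial_le_factorial_mul_pow_sub h
  have hpow : x ^ n = x ^ m * x ^ (n - m) := by rw [← pow_add, Nat.add_sub_cancel' h]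
  rw [hpow, div_pow, div_le_div_iff₀ (by positivity) (by positivity)]
  calc x ^ m / m ! * n ! * x ^ (n - m) ≤ x ^ m / m ! * (m ! * (n : ℝ) ^ (n - m)) * x ^ (n - m) := by
        gcongr
    _ = (n : ℝ) ^ (n - m) * (x ^ m * x ^ (n - m)) := by field_simp

lemma one_add_pow_le_exp_mul {t : ℝ} (ht : -1 ≤ t) (j : ℕ) : (1 + t) ^ j ≤ exp (t * j) := by
  rw [mul_comm, Real.exp_nat_mul]
  exact pow_le_pow_left₀ (by linarith) (by linarith [Real.add_one_le_exp t]) j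

lemma pow_sub_floor_le_exp {B : ℝ} (hB : 0 ≤ B) {n : ℕ} (hBn : B < √n) :
    ((n : ℝ) / (n - B * √n)) ^ (n - ⌊(n : ℝ) - B * √n⌋₊) ≤
      exp (B ^ 2 + (B ^ 3 + B) / (√n - B)) := by
  set s := √(n : ℝ)
  have hs : s ^ 2 = n := Real.sq_sqrt (Nat.cast_nonneg n)
  have hsB : 0 < s - B := by linarith
  have hlam : (n : ℝ) - B * s = s * (s - B) := by rw [← hs]; ring
  have hlam_pos : 0 < (n : ℝ) - B * s := by rw [hlam]; nlinarith
  set m := ⌊(n : ℝ) - B * s⌋₊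
  have hmn : m ≤ n := Nat.floor_le_of_le (by nlinarith [Real.sqrt_nonneg (n : ℝ)])
  have hj : ((n - m : ℕ) : ℝ) ≤ B * s + 1 := by
    rw [Nat.cast_sub hmn]; linarith [Nat.lt_floor_add_one ((n : ℝ) - B * s)]
  have hratio : (n : ℝ) / (n - B * s) = 1 + B / (s - B) := by
    rw [hlam, ← hs]; field_simp; ring
  have hexp : B / (s - B) * (B * s + 1) = B ^ 2 + (B ^ 3 + B) / (s - B) := by
    field_simp; ring
  have ht : 0 ≤ B / (s - B) := by positivity
  rw [hratio, ← hexp]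
  calc (1 + B / (s - B)) ^ (n - m) ≤ exp (B / (s - B) * (n - m : ℕ)) :=
        one_add_pow_le_exp_mul (by linarith) _
    _ ≤ exp (B / (s - B) * (B * s + 1)) := by gcongr

lemma exp_le_one_add_two_mul {y : ℝ} (hy : 0 ≤ y) (hy' : y ≤ 1 / 2) : exp y ≤ 1 + 2 * y := by
  calc exp y ≤ 1 / (1 - y) := Real.exp_bound_div_one_sub_of_interval hy (by linarith)
    _ ≤ 1 + 2 * y := by
      rw [div_le_iff₀ (by linarith)]; nlinarith

/-- The threshold `(2B³ + 3B)⁴` makes `r^{1/4} ≥ 2(B³ + B) + B`. -/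
lemma exp_div_sqrt_sub_le_one_add_rpow {B r : ℝ} (hB : 0 ≤ B) (hr : 1 ≤ r)
    (hBr : (2 * B ^ 3 + 3 * B) ^ 4 ≤ r) (hBs : B < √r) :
    exp ((B ^ 3 + B) / (√r - B)) ≤ 1 + r ^ (-(1 / 4 : ℝ)) := by
  set x := r ^ (-(1 / 4 : ℝ))
  have hr0 : 0 < r := by linarith
  have hx1 : x ≤ 1 := Real.rpow_le_one_of_one_le_of_nonpos hr (by norm_num)
  have hxs : x * √r = r ^ (1 / 4 : ℝ) := by
    rw [Real.sqrt_eq_rpow, ← Real.rpow_add hr0]; norm_num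
  have hC : 2 * B ^ 3 + 3 * B ≤ r ^ (1 / 4 : ℝ) := by
    rw [one_div, Real.le_rpow_inv_iff_of_pos (by positivity) hr0.le (by norm_num)]
    exact_mod_cast hBr
  have hy : 2 * ((B ^ 3 + B) / (√r - B)) ≤ x := by
    rw [← mul_div_assoc, div_le_iff₀ (by linarith)]
    nlinarith
  calc exp ((B ^ 3 + B) / (√r - B)) ≤ 1 + 2 * ((B ^ 3 + B) / (√r - B)) :=
        exp_le_one_add_two_mul (div_nonneg (by positivity) (by linarith)) (by linarith)
    _ ≤ 1 + x := by linarith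

theorem stmt_16 (B : ℝ) (hB : 0 < B) :
    ∃ N : ℕ, ∀ n : ℕ, N ≤ n → 0 < (n : ℝ) - B * Real.sqrt n →
      ∀ k : ℕ,
        (if k ≤ n then ((n : ℝ) - B * Real.sqrt n) ^ k / (Nat.factorial k)
          else (((n : ℝ) - B * Real.sqrt n) ^ n / (Nat.factorial n)) *
            (((n : ℝ) - B * Real.sqrt n) / n) ^ (k - n)) *
          (Nat.factorial n) / ((n : ℝ) - B * Real.sqrt n) ^ n ≤
        (1 + (n : ℝ) ^ (-(1 / 4 : ℝ))) * Real.exp (B ^ 2) := by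
  refine ⟨⌈(2 * B ^ 3 + 3 * B) ^ 4⌉₊ + 1, fun n hN hlam k => ?_⟩
  set lam := (n : ℝ) - B * √n
  have hn : (1 : ℝ) ≤ n := by exact_mod_cast (Nat.succ_pos _).trans_le hN
  have hBn : B < √n := by
    nlinarith [Real.sq_sqrt (Nat.cast_nonneg (α := ℝ) n), Real.sqrt_nonneg (n : ℝ)]
  have hlam_le : lam ≤ n := by have := Real.sqrt_nonneg (n : ℝ); nlinarith
  have hone_le : 1 ≤ (1 + (n : ℝ) ^ (-(1 / 4 : ℝ))) * exp (B ^ 2) := by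
    have := Real.rpow_nonneg (Nat.cast_nonneg (α := ℝ) n) (-(1 / 4 : ℝ))
    exact one_le_mul_of_one_le_of_one_le (by linarith) (Real.one_le_exp (sq_nonneg B))
  split_ifs with hk
  · have hfloor : ⌊lam⌋₊ ≤ n := Nat.floor_le_of_le hlam_le
    have hthreshold : (2 * B ^ 3 + 3 * B) ^ 4 ≤ (n : ℝ) :=
      (Nat.le_ceil _).trans (by exact_mod_cast (Nat.le_succ _).trans hN)
    calc lam ^ k / k ! * n ! / lam ^ n ≤ lam ^ ⌊lam⌋₊ / ⌊lam⌋₊ ! * n ! / lam ^ n := by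
          gcongr ?_ * _ / _; exact pow_div_factorial_le_floor hlam.le k
      _ ≤ ((n : ℝ) / lam) ^ (n - ⌊lam⌋₊) := pow_div_factorial_mul_factorial_div_pow_le hlam hfloor
      _ ≤ exp (B ^ 2 + (B ^ 3 + B) / (√n - B)) := pow_sub_floor_le_exp hB.le hBn
      _ = exp ((B ^ 3 + B) / (√n - B)) * exp (B ^ 2) := by rw [Real.exp_add, mul_comm]
      _ ≤ (1 + (n : ℝ) ^ (-(1 / 4 : ℝ))) * exp (B ^ 2) := by
          gcongr; exact exp_div_sqrt_sub_le_one_add_rpow hB.le hn hthreshold hBn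
  · have hsimp : lam ^ n / n ! * (lam / n) ^ (k - n) * n ! / lam ^ n = (lam / n) ^ (k - n) := by
      field_simp
    rw [hsimp]
    exact (pow_le_one₀ (by positivity) ((div_le_one (by linarith)).mpr hlam_le)).trans hone_le
end

section
/- For n ≥ 1 and real λ with 0 < λ < n, the quantity inf_{k ≥ 1} [λ + min(k,n) - √λ·(√(min(k-1,n)) + √(min(k,n)))] is at least min( (√λ)/(2√n), (√n - √λ)² ). -/
theorem stmt_18 (n : ℕ) (hn : 1 ≤ n) (lam : ℝ) (hlam : 0 < lam) (hln : lam < n) :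
    min (Real.sqrt lam / (2 * Real.sqrt n)) ((Real.sqrt n - Real.sqrt lam) ^ 2) ≤
      ⨅ k : {k : ℕ // 1 ≤ k},
        (lam + (min (k : ℕ) n : ℕ) -
          Real.sqrt lam * (Real.sqrt (min ((k : ℕ) - 1) n : ℕ) +
            Real.sqrt (min (k : ℕ) n : ℕ))) := by
  apply le_ciInf
  rintro ⟨k, hk⟩
  simp only
  have hn0 : (0:ℝ) < n := by exact_mod_cast Nat.lt_of_lt_of_le Nat.zero_lt_one hn
  have hsn : 0 < Real.sqrt n := Real.sqrt_pos.mpr hn0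
  have hsl : 0 < Real.sqrt lam := Real.sqrt_pos.mpr hlam
  have hsl2 : Real.sqrt lam ^ 2 = lam := Real.sq_sqrt hlam.le
  have hsn2 : Real.sqrt n ^ 2 = (n:ℝ) := Real.sq_sqrt hn0.le
  by_cases hkn : k ≤ n
  · -- k ≤ n case
    have h1 : min k n = k := min_eq_left hkn
    have h2 : min (k - 1) n = k - 1 := min_eq_left (le_trans (Nat.sub_le k 1) hkn)
    rw [h1, h2]
    have hcast : ((k - 1 : ℕ) : ℝ) = (k:ℝ) - 1 := by
      rw [Nat.cast_sub hk]; simp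
    rw [hcast]
    set a := Real.sqrt (k:ℝ) with ha
    set b := Real.sqrt ((k:ℝ) - 1) with hb
    have hk0 : (0:ℝ) < k := by exact_mod_cast hk
    have ha2 : a ^ 2 = (k:ℝ) := Real.sq_sqrt hk0.le
    have hb2 : b ^ 2 = (k:ℝ) - 1 := Real.sq_sqrt (by linarith : (0:ℝ) ≤ (k:ℝ) - 1)
    have hb0 : 0 ≤ b := Real.sqrt_nonneg _
    have ha0 : 0 < a := Real.sqrt_pos.mpr hk0
    have hab : b ≤ a := Real.sqrt_le_sqrt (by linarith)
    have han : a ≤ Real.sqrt n := Real.sqrt_le_sqrt (by exact_mod_cast hkn)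
    refine le_trans (min_le_left _ _) ?_
    rw [div_le_iff₀ (by positivity)]
    -- key facts: (a-b)(a+b) = 1, a+b ≤ 2√n, (√λ - a)² ≥ 0
    have key : (a - b) * (a + b) = 1 := by nlinarith [ha2, hb2]
    have hb_le : b ≤ Real.sqrt n := le_trans hab han
    nlinarith [sq_nonneg (Real.sqrt lam - a), mul_pos hsl hsn,
      mul_nonneg (mul_nonneg hsl.le (sub_nonneg.mpr hab)) (sub_nonneg.mpr (by linarith : a + b ≤ 2 * Real.sqrt n))]
  · -- k > n case
    push_neg at hkn
    have h1 : min k n = n := min_eq_right hkn.le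
    have h2 : min (k - 1) n = n := min_eq_right (by omega)
    rw [h1, h2]
    refine le_trans (min_le_right _ _) ?_
    nlinarith [hsl2, hsn2]
end

section
/- Let B ∈ (0,2) and λ_n = n - B√n. Define σ_n(y) = f_{n,n}(y) - √(λ_n n)·f_{n,n-1}(y), where f_{n,k}(x) = ∑_{j=0}^k C(k,j)λ_n^j ∏_{i=1}^{k-j}(i-x). Then for all n with λ_n > 0 and n > λ_n + 1: σ_n(0) > 0 and σ_n(1) < 0, hence σ_n has a root in (0,1). -/
/-- The polynomials `f_{n,k}(x)` associated to the `M/M/n` queue with arrival rate `lam`,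
given by their series representation. -/
noncomputable def queuePoly (lam : ℝ) (k : ℕ) (x : ℝ) : ℝ :=
  ∑ j ∈ Finset.range (k + 1),
    (k.choose j : ℝ) * lam ^ j * ∏ i ∈ Finset.Icc 1 (k - j), ((i : ℝ) - x)

lemma queuePoly_one (lam : ℝ) (k : ℕ) : queuePoly lam k 1 = lam ^ k := by
  unfold queuePoly
  rw [Finset.sum_eq_single k]
  · simp
  · intro j hj hne
    have hjk : j < k := lt_of_le_of_ne (Nat.lt_succ_iff.mp (Finset.mem_range.mp hj)) hne
    have h1 : (1 : ℕ) ∈ Finset.Icc 1 (k - j) := by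
      simp [Nat.one_le_iff_ne_zero, Nat.sub_ne_zero_of_lt hjk]
    rw [Finset.prod_eq_zero h1 (by norm_num)]
    ring
  · intro h; exact absurd (Finset.self_mem_range_succ k) h

lemma queuePoly_zero (lam : ℝ) (k : ℕ) :
    queuePoly lam k 0 = ∑ j ∈ Finset.range (k + 1),
      (k.choose j : ℝ) * lam ^ j * ((k - j).factorial : ℝ) := by
  unfold queuePoly
  refine Finset.sum_congr rfl fun j _ => ?_
  congr 1
  have : ∏ i ∈ Finset.Icc 1 (k - j), ((i : ℝ) - 0) =
      ((∏ i ∈ Finset.Icc 1 (k - j), i : ℕ) : ℝ) := by push_cast; simp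
  rw [this, ← Finset.Ico_add_one_right_eq_Icc, Finset.prod_Ico_id_eq_factorial]

lemma queuePoly_continuous (lam : ℝ) (k : ℕ) : Continuous (queuePoly lam k) := by
  unfold queuePoly
  exact continuous_finset_sum _ fun j _ =>
    continuous_const.mul (continuous_finset_prod _ fun i _ =>
      continuous_const.sub continuous_id)

theorem stmt_19 (B : ℝ) (hB0 : 0 < B) (hB2 : B < 2) (n : ℕ)
    (hpos : 0 < (n : ℝ) - B * Real.sqrt n)
    (hgap : (n : ℝ) - B * Real.sqrt n + 1 < n) :
    (0 < queuePoly ((n : ℝ) - B * Real.sqrt n) n 0 -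
        Real.sqrt (((n : ℝ) - B * Real.sqrt n) * n) *
          queuePoly ((n : ℝ) - B * Real.sqrt n) (n - 1) 0) ∧
    (queuePoly ((n : ℝ) - B * Real.sqrt n) n 1 -
        Real.sqrt (((n : ℝ) - B * Real.sqrt n) * n) *
          queuePoly ((n : ℝ) - B * Real.sqrt n) (n - 1) 1 < 0) ∧
    ∃ y ∈ Set.Ioo (0 : ℝ) 1,
      queuePoly ((n : ℝ) - B * Real.sqrt n) n y -
        Real.sqrt (((n : ℝ) - B * Real.sqrt n) * n) *
          queuePoly ((n : ℝ) - B * Real.sqrt n) (n - 1) y = 0 := by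
  set L : ℝ := (n : ℝ) - B * Real.sqrt n with hL
  have hLn : L < n := by linarith
  have hn2 : 2 ≤ n := by
    by_contra h
    interval_cases n <;> simp_all <;> linarith
  have hn1 : (1 : ℕ) ≤ n := by omega
  have hnpos : (0 : ℝ) < n := by positivity
  -- sqrt facts
  have hsq_lt : Real.sqrt (L * n) < n := by
    have : L * n < (n : ℝ) ^ 2 := by nlinarith
    calc Real.sqrt (L * n) < Real.sqrt ((n : ℝ) ^ 2) :=
          Real.sqrt_lt_sqrt (by positivity) this
      _ = n := by rw [Real.sqrt_sq hnpos.le]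
  have hsq_gt : L < Real.sqrt (L * n) := by
    have : L ^ 2 < L * n := by nlinarith
    calc L = Real.sqrt (L ^ 2) := (Real.sqrt_sq hpos.le).symm
      _ < Real.sqrt (L * n) := Real.sqrt_lt_sqrt (by positivity) this
  -- key combinatorial identity: c_j = n * d_j for j < n
  have hkey : ∀ j ∈ Finset.range n,
      (n.choose j : ℝ) * L ^ j * ((n - j).factorial : ℝ) =
      (n : ℝ) * ((n - 1).choose j * L ^ j * ((n - 1 - j).factorial : ℝ)) := by
    intro j hj
    have hjn : j < n := Finset.mem_range.mp hj
    have h1 : n.choose j * (n - j).factorial * j.factorial = n.factorial := by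
      have := Nat.choose_mul_factorial_mul_factorial hjn.le
      linarith [this]
    have h2 : (n - 1).choose j * (n - 1 - j).factorial * j.factorial
        = (n - 1).factorial := by
      have := Nat.choose_mul_factorial_mul_factorial (Nat.le_sub_one_of_lt hjn)
      linarith [this]
    have h3 : n.choose j * (n - j).factorial
        = n * ((n - 1).choose j * (n - 1 - j).factorial) := by
      have hfac : n * (n - 1).factorial = n.factorial := by
        rw [← Nat.succ_pred_eq_of_pos (by omega : 0 < n), Nat.factorial_succ]
        simp
      have := h1
      have h2' : n * ((n - 1).choose j * (n - 1 - j).factorial) * j.factorial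
          = n.factorial := by
        rw [← hfac]; ring_nf; ring_nf at h2; nlinarith [h2]
      exact Nat.eq_of_mul_eq_mul_right j.factorial_pos (by rw [h1, h2'])
    have := congrArg (fun m : ℕ => (m : ℝ)) h3
    push_cast at this
    nlinarith [this, pow_pos hpos j]
  -- zero values
  have hz_n : queuePoly L n 0 =
      (∑ j ∈ Finset.range n, (n : ℝ) * ((n - 1).choose j * L ^ j * ((n - 1 - j).factorial : ℝ)))
      + L ^ n := by
    rw [queuePoly_zero, Finset.sum_range_succ]
    simp only [Nat.choose_self, Nat.sub_self, Nat.factorial_zero]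
    rw [Finset.sum_congr rfl hkey]
    push_cast; ring
  have hz_n1 : queuePoly L (n - 1) 0 =
      ∑ j ∈ Finset.range n, ((n - 1).choose j * L ^ j * ((n - 1 - j).factorial : ℝ)) := by
    rw [queuePoly_zero, Nat.sub_add_cancel hn1]
  have hSpos : (0 : ℝ) < ∑ j ∈ Finset.range n,
      ((n - 1).choose j * L ^ j * ((n - 1 - j).factorial : ℝ)) := by
    apply Finset.sum_pos
    · intro j hj
      have hjn : j < n := Finset.mem_range.mp hj
      have : 0 < (n - 1).choose j := Nat.choose_pos (by omega)
      positivity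
    · exact ⟨0, Finset.mem_range.mpr (by omega)⟩
  have h0pos : 0 < queuePoly L n 0 - Real.sqrt (L * n) * queuePoly L (n - 1) 0 := by
    rw [hz_n, hz_n1, ← Finset.mul_sum]
    have hLn_pow : (0 : ℝ) < L ^ n := pow_pos hpos n
    nlinarith [hSpos, hsq_lt, hLn_pow]
  have h1neg : queuePoly L n 1 - Real.sqrt (L * n) * queuePoly L (n - 1) 1 < 0 := by
    rw [queuePoly_one, queuePoly_one]
    have hpow : (0 : ℝ) < L ^ (n - 1) := pow_pos hpos _
    have : L ^ n = L ^ (n - 1) * L := by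
      rw [← pow_succ]; congr 1; omega
    rw [this]
    nlinarith [hsq_gt, hpow]
  refine ⟨h0pos, h1neg, ?_⟩
  set f : ℝ → ℝ := fun y => queuePoly L n y - Real.sqrt (L * n) * queuePoly L (n - 1) y
  have hf : Continuous f :=
    (queuePoly_continuous L n).sub (continuous_const.mul (queuePoly_continuous L (n - 1)))
  have h01 : (0 : ℝ) ≤ 1 := zero_le_one
  have := intermediate_value_Ioo' h01 hf.continuousOn
  have hmem : (0 : ℝ) ∈ Set.Ioo (f 1) (f 0) := ⟨h1neg, h0pos⟩
  obtain ⟨y, hy, hfy⟩ := this hmem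
  exact ⟨y, hy, hfy⟩
end
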